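/- arXiv:2410.11558 — 2 statements merged into one kernel-verified Lean document; each statement's English description precedes it below -/
import Mathlib

section
/- Let (q(t), S(t)) be a smooth curve in ℝ^d × ℝ. The curve satisfies the Euler–Lagrange equations of the simple thermodynamic system, namely d/dt(∂L/∂v(q,q̇,S)) − ∂L/∂q(q,q̇,S) = F^fr(q,q̇,S) and (∂L/∂S)(q,q̇,S)·Ṡ = ⟨F^fr(q,q̇,S), q̇⟩, if and only if the curve (q(t), p(t), S(t)) with p(t) = ∂L/∂v(q(t),q̇(t),S(t)) satisfies the Hamiltonian-form equations q̇ = ∂H/∂p, ṗ = −∂H/∂q + F^fr(q,q̇,S), and (∂H/∂S)·Ṡ = −⟨F^fr(q,q̇,S), q̇⟩, where all partial derivatives are evaluated along the curve. -/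
open scoped RealInnerProductSpace

noncomputable section

/-- Partial gradient of `F (q, v, S)` in the first (position) variable. -/
def pdq {d : ℕ} (F : EuclideanSpace ℝ (Fin d) → EuclideanSpace ℝ (Fin d) → ℝ → ℝ)
    (q v : EuclideanSpace ℝ (Fin d)) (S : ℝ) : EuclideanSpace ℝ (Fin d) :=
  gradient (fun x => F x v S) q

/-- Partial gradient of `F (q, v, S)` in the second (velocity/momentum) variable. -/
def pdv {d : ℕ} (F : EuclideanSpace ℝ (Fin d) → EuclideanSpace ℝ (Fin d) → ℝ → ℝ)
    (q v : EuclideanSpace ℝ (Fin d)) (S : ℝ) : EuclideanSpace ℝ (Fin d) :=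
  gradient (fun y => F q y S) v

/-- Partial derivative of `F (q, v, S)` in the last (entropy) variable. -/
def pdS {d : ℕ} (F : EuclideanSpace ℝ (Fin d) → EuclideanSpace ℝ (Fin d) → ℝ → ℝ)
    (q v : EuclideanSpace ℝ (Fin d)) (S : ℝ) : ℝ :=
  deriv (fun s => F q v s) S

lemma aux_fderiv_split {F G H' : Type*} [NormedAddCommGroup F] [NormedSpace ℝ F]
    [NormedAddCommGroup G] [NormedSpace ℝ G] [NormedAddCommGroup H'] [NormedSpace ℝ H']
    {f : F × G → H'} {a : F} {b : G} (hf : DifferentiableAt ℝ f (a, b)) (u : F) (w : G) :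
    fderiv ℝ f (a, b) (u, w)
      = fderiv ℝ (fun x => f (x, b)) a u + fderiv ℝ (fun y => f (a, y)) b w := by
  have h1 : HasFDerivAt (fun x => f (x, b))
      ((fderiv ℝ f (a, b)).comp (ContinuousLinearMap.inl ℝ F G)) a :=
    hf.hasFDerivAt.comp a (hasFDerivAt_prodMk_left a b)
  have h2 : HasFDerivAt (fun y => f (a, y))
      ((fderiv ℝ f (a, b)).comp (ContinuousLinearMap.inr ℝ F G)) b :=
    hf.hasFDerivAt.comp b (hasFDerivAt_prodMk_right a b)
  rw [h1.fderiv, h2.fderiv]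
  simp only [ContinuousLinearMap.comp_apply, ContinuousLinearMap.inl_apply,
    ContinuousLinearMap.inr_apply]
  rw [← map_add]
  norm_num

lemma aux_fderiv_inner_gradient {F : Type*} [NormedAddCommGroup F] [InnerProductSpace ℝ F]
    [CompleteSpace F] {f : F → ℝ} {x : F} (hf : DifferentiableAt ℝ f x) (u : F) :
    fderiv ℝ f x u = ⟪gradient f x, u⟫ := by
  rw [hf.hasGradientAt.hasFDerivAt.fderiv, InnerProductSpace.toDual_apply_apply]

section Key

variable {d : ℕ}
  {L : EuclideanSpace ℝ (Fin d) → EuclideanSpace ℝ (Fin d) → ℝ → ℝ}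
  {V : EuclideanSpace ℝ (Fin d) → EuclideanSpace ℝ (Fin d) → ℝ → EuclideanSpace ℝ (Fin d)}
  {H : EuclideanSpace ℝ (Fin d) → EuclideanSpace ℝ (Fin d) → ℝ → ℝ}

local notation "E" => EuclideanSpace ℝ (Fin d)

-- general differentiability of partial maps
lemma diffAt_partial1 {X : Type*} [NormedAddCommGroup X] [NormedSpace ℝ X]
    (F : EuclideanSpace ℝ (Fin d) → EuclideanSpace ℝ (Fin d) → ℝ → X)
    (hF : Differentiable ℝ (fun x : EuclideanSpace ℝ (Fin d) × EuclideanSpace ℝ (Fin d) × ℝ =>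
      F x.1 x.2.1 x.2.2)) (v : EuclideanSpace ℝ (Fin d)) (S : ℝ) :
    Differentiable ℝ (fun x => F x v S) :=
  hF.comp (differentiable_id.prodMk ((differentiable_const v).prodMk (differentiable_const S)))

lemma diffAt_partial2 {X : Type*} [NormedAddCommGroup X] [NormedSpace ℝ X]
    (F : EuclideanSpace ℝ (Fin d) → EuclideanSpace ℝ (Fin d) → ℝ → X)
    (hF : Differentiable ℝ (fun x : EuclideanSpace ℝ (Fin d) × EuclideanSpace ℝ (Fin d) × ℝ =>
      F x.1 x.2.1 x.2.2)) (q : EuclideanSpace ℝ (Fin d)) (S : ℝ) :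
    Differentiable ℝ (fun y => F q y S) :=
  hF.comp ((differentiable_const q).prodMk (differentiable_id.prodMk (differentiable_const S)))

lemma diffAt_partial3 {X : Type*} [NormedAddCommGroup X] [NormedSpace ℝ X]
    (F : EuclideanSpace ℝ (Fin d) → EuclideanSpace ℝ (Fin d) → ℝ → X)
    (hF : Differentiable ℝ (fun x : EuclideanSpace ℝ (Fin d) × EuclideanSpace ℝ (Fin d) × ℝ =>
      F x.1 x.2.1 x.2.2)) (q v : EuclideanSpace ℝ (Fin d)) :
    Differentiable ℝ (fun s => F q v s) :=
  hF.comp ((differentiable_const q).prodMk ((differentiable_const v).prodMk differentiable_id))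

variable (hLd : Differentiable ℝ (fun x : EuclideanSpace ℝ (Fin d) × EuclideanSpace ℝ (Fin d) × ℝ =>
      L x.1 x.2.1 x.2.2))
  (hVd : Differentiable ℝ (fun x : EuclideanSpace ℝ (Fin d) × EuclideanSpace ℝ (Fin d) × ℝ =>
      V x.1 x.2.1 x.2.2))
  (hLeg₂ : ∀ q p S, pdv L q (V q p S) S = p)
  (hH : ∀ q p S, H q p S = ⟪p, V q p S⟫ - L q (V q p S) S)

include hLd hVd hLeg₂ hH

/-- The Legendre relation as an `HasFDerivAt`. -/
lemma legendre_fderiv (q p : EuclideanSpace ℝ (Fin d)) (S : ℝ) :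
    HasFDerivAt (fun z => L q z S) (InnerProductSpace.toDual ℝ (EuclideanSpace ℝ (Fin d)) p)
      (V q p S) := by
  have h := ((diffAt_partial2 L hLd q S) (V q p S)).hasGradientAt
  have : gradient (fun y => L q y S) (V q p S) = p := hLeg₂ q p S
  rw [this] at h
  exact h.hasFDerivAt

lemma pdv_H (q p : EuclideanSpace ℝ (Fin d)) (S : ℝ) : pdv H q p S = V q p S := by
  set v := V q p S with hv
  have hWd : DifferentiableAt ℝ (fun y => V q y S) p := (diffAt_partial2 V hVd q S) p
  set W' := fderiv ℝ (fun y => V q y S) p with hW'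
  have hW : HasFDerivAt (fun y => V q y S) W' p := hWd.hasFDerivAt
  have h1 : HasFDerivAt (fun y : EuclideanSpace ℝ (Fin d) => ⟪y, V q y S⟫)
      ((fderivInnerCLM ℝ (p, v)).comp ((ContinuousLinearMap.id ℝ (EuclideanSpace ℝ (Fin d))).prod W')) p :=
    (hasFDerivAt_id p).inner ℝ hW
  have h2 : HasFDerivAt (fun y => L q (V q y S) S)
      ((InnerProductSpace.toDual ℝ (EuclideanSpace ℝ (Fin d)) p).comp W') p :=
    by have := (legendre_fderiv hLd hVd hLeg₂ hH q p S).comp p hW; exact this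
  have h3 := h1.sub h2
  have heq : (fun y => H q y S) = fun y => ⟪y, V q y S⟫ - L q (V q y S) S :=
    funext fun y => hH q y S
  simp only [Pi.sub_def] at h3
  rw [← heq] at h3
  have hD : (fderivInnerCLM ℝ (p, v)).comp
        ((ContinuousLinearMap.id ℝ (EuclideanSpace ℝ (Fin d))).prod W')
      - (InnerProductSpace.toDual ℝ (EuclideanSpace ℝ (Fin d)) p).comp W'
      = InnerProductSpace.toDual ℝ (EuclideanSpace ℝ (Fin d)) v := by
    ext u
    simp only [ContinuousLinearMap.coe_sub', Pi.sub_apply, ContinuousLinearMap.comp_apply,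
      ContinuousLinearMap.prod_apply, ContinuousLinearMap.id_apply, fderivInnerCLM_apply,
      InnerProductSpace.toDual_apply_apply]
    rw [real_inner_comm v u]
    ring
  rw [hD] at h3
  exact ((hasGradientAt_iff_hasFDerivAt).2 h3).gradient

lemma pdq_H (q p : EuclideanSpace ℝ (Fin d)) (S : ℝ) :
    pdq H q p S = - pdq L q (V q p S) S := by
  set v := V q p S with hv
  have hUd : DifferentiableAt ℝ (fun x => V x p S) q := (diffAt_partial1 V hVd p S) q
  set U' := fderiv ℝ (fun x => V x p S) q with hU'
  have hU : HasFDerivAt (fun x => V x p S) U' q := hUd.hasFDerivAt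
  have h1 : HasFDerivAt (fun x : EuclideanSpace ℝ (Fin d) => ⟪p, V x p S⟫)
      ((fderivInnerCLM ℝ (p, v)).comp
        ((0 : EuclideanSpace ℝ (Fin d) →L[ℝ] EuclideanSpace ℝ (Fin d)).prod U')) q :=
    (hasFDerivAt_const p q).inner ℝ hU
  -- the two-variable slice of L
  set Lc : EuclideanSpace ℝ (Fin d) × EuclideanSpace ℝ (Fin d) → ℝ := fun y => L y.1 y.2 S
    with hLc
  have hLcd : Differentiable ℝ Lc :=
    hLd.comp (differentiable_fst.prodMk (differentiable_snd.prodMk (differentiable_const S)))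
  have hpath : HasFDerivAt (fun x => (x, V x p S))
      ((ContinuousLinearMap.id ℝ (EuclideanSpace ℝ (Fin d))).prod U') q :=
    (hasFDerivAt_id q).prodMk hU
  have h2 : HasFDerivAt (fun x => L x (V x p S) S)
      ((fderiv ℝ Lc (q, v)).comp
        ((ContinuousLinearMap.id ℝ (EuclideanSpace ℝ (Fin d))).prod U')) q :=
    by have := (hLcd (q, v)).hasFDerivAt.comp q hpath; exact this
  have h3 := h1.sub h2
  have heq : (fun x => H x p S) = fun x => ⟪p, V x p S⟫ - L x (V x p S) S :=
    funext fun x => hH x p S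
  simp only [Pi.sub_def] at h3
  rw [← heq] at h3
  have hsplit : ∀ u w, fderiv ℝ Lc (q, v) (u, w) = ⟪pdq L q v S, u⟫ + ⟪p, w⟫ := by
    intro u w
    rw [aux_fderiv_split (hLcd (q, v)) u w]
    have e1 : fderiv ℝ (fun x => Lc (x, v)) q u = ⟪pdq L q v S, u⟫ :=
      aux_fderiv_inner_gradient ((diffAt_partial1 L hLd v S) q) u
    have e2 : fderiv ℝ (fun y => Lc (q, y)) v w = ⟪p, w⟫ := by
      have := aux_fderiv_inner_gradient ((diffAt_partial2 L hLd q S) v) w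
      rw [show gradient (fun y => L q y S) v = p from hLeg₂ q p S] at this
      exact this
    rw [e1, e2]
  have hD : (fderivInnerCLM ℝ (p, v)).comp
        ((0 : EuclideanSpace ℝ (Fin d) →L[ℝ] EuclideanSpace ℝ (Fin d)).prod U')
      - (fderiv ℝ Lc (q, v)).comp
        ((ContinuousLinearMap.id ℝ (EuclideanSpace ℝ (Fin d))).prod U')
      = InnerProductSpace.toDual ℝ (EuclideanSpace ℝ (Fin d)) (- pdq L q v S) := by
    ext u
    simp only [ContinuousLinearMap.coe_sub', Pi.sub_apply, ContinuousLinearMap.comp_apply,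
      ContinuousLinearMap.prod_apply, ContinuousLinearMap.zero_apply,
      ContinuousLinearMap.id_apply, fderivInnerCLM_apply, InnerProductSpace.toDual_apply_apply,
      hsplit u (U' u), inner_zero_left, inner_neg_left]
    ring
  rw [hD] at h3
  exact ((hasGradientAt_iff_hasFDerivAt).2 h3).gradient

lemma pdS_H (q p : EuclideanSpace ℝ (Fin d)) (S : ℝ) :
    pdS H q p S = - pdS L q (V q p S) S := by
  set v := V q p S with hv
  have hZd : DifferentiableAt ℝ (fun s => V q p s) S := (diffAt_partial3 V hVd q p) S
  set Z' := deriv (fun s => V q p s) S with hZ'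
  have hZ : HasDerivAt (fun s => V q p s) Z' S := hZd.hasDerivAt
  have h1 : HasDerivAt (fun s => ⟪p, V q p s⟫) (⟪p, Z'⟫ + ⟪(0 : EuclideanSpace ℝ (Fin d)), v⟫) S :=
    (hasDerivAt_const S p).inner ℝ hZ
  set Lc : EuclideanSpace ℝ (Fin d) × ℝ → ℝ := fun y => L q y.1 y.2 with hLc
  have hLcd : Differentiable ℝ Lc :=
    hLd.comp ((differentiable_const q).prodMk (differentiable_fst.prodMk differentiable_snd))
  have hpath : HasDerivAt (fun s => ((V q p s : EuclideanSpace ℝ (Fin d)), s)) (Z', 1) S :=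
    hZ.prodMk (hasDerivAt_id S)
  have h2pre := (hLcd ((V q p S), S)).hasFDerivAt.comp_hasDerivAt_of_eq S hpath rfl
  have h2 : HasDerivAt (fun s => L q (V q p s) s) (fderiv ℝ Lc (v, S) (Z', 1)) S := h2pre
  have h3 := h1.sub h2
  have heq : (fun s => H q p s) = fun s => ⟪p, V q p s⟫ - L q (V q p s) s :=
    funext fun s => hH q p s
  simp only [Pi.sub_def] at h3
  rw [← heq] at h3
  have hsplit : fderiv ℝ Lc (v, S) (Z', 1) = ⟪p, Z'⟫ + pdS L q v S := by
    rw [aux_fderiv_split (hLcd (v, S)) Z' 1]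
    have e1 : fderiv ℝ (fun y => Lc (y, S)) v Z' = ⟪p, Z'⟫ := by
      have := aux_fderiv_inner_gradient ((diffAt_partial2 L hLd q S) v) Z'
      rw [show gradient (fun y => L q y S) v = p from hLeg₂ q p S] at this
      exact this
    have e2 : fderiv ℝ (fun s => Lc (v, s)) S 1 = pdS L q v S := fderiv_apply_one_eq_deriv
    rw [e1, e2]
  rw [hsplit] at h3
  have := h3.deriv
  rw [show pdS H q p S = deriv (fun s => H q p s) S from rfl, this]
  simp only [inner_zero_left]
  ring

end Key

/-- Equivalence of the Euler–Lagrange form and the Hamiltonian form of the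
equations of motion of a simple thermodynamic system. -/
theorem simple_system_EL_iff_Hamiltonian {d : ℕ}
    (L : EuclideanSpace ℝ (Fin d) → EuclideanSpace ℝ (Fin d) → ℝ → ℝ)
    (Ffr : EuclideanSpace ℝ (Fin d) → EuclideanSpace ℝ (Fin d) → ℝ → EuclideanSpace ℝ (Fin d))
    (V : EuclideanSpace ℝ (Fin d) → EuclideanSpace ℝ (Fin d) → ℝ → EuclideanSpace ℝ (Fin d))
    (hL : ContDiff ℝ (⊤ : ℕ∞) (fun x : EuclideanSpace ℝ (Fin d) × EuclideanSpace ℝ (Fin d) × ℝ =>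
      L x.1 x.2.1 x.2.2))
    (hV : ContDiff ℝ (⊤ : ℕ∞) (fun x : EuclideanSpace ℝ (Fin d) × EuclideanSpace ℝ (Fin d) × ℝ =>
      V x.1 x.2.1 x.2.2))
    -- the Legendre transform `(q, v, S) ↦ (q, ∂L/∂v, S)` has inverse `v = V (q, p, S)`
    (hLeg₁ : ∀ q v S, V q (pdv L q v S) S = v)
    (hLeg₂ : ∀ q p S, pdv L q (V q p S) S = p)
    (H : EuclideanSpace ℝ (Fin d) → EuclideanSpace ℝ (Fin d) → ℝ → ℝ)
    (hH : ∀ q p S, H q p S = ⟪p, V q p S⟫ - L q (V q p S) S)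
    (q : ℝ → EuclideanSpace ℝ (Fin d)) (S : ℝ → ℝ)
    (hq : ContDiff ℝ (⊤ : ℕ∞) q) (hS : ContDiff ℝ (⊤ : ℕ∞) S)
    (p : ℝ → EuclideanSpace ℝ (Fin d))
    (hp : ∀ t, p t = pdv L (q t) (deriv q t) (S t)) :
    (∀ t : ℝ,
        deriv (fun τ => pdv L (q τ) (deriv q τ) (S τ)) t - pdq L (q t) (deriv q t) (S t)
            = Ffr (q t) (deriv q t) (S t)
        ∧ pdS L (q t) (deriv q t) (S t) * deriv S t
            = ⟪Ffr (q t) (deriv q t) (S t), deriv q t⟫)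
    ↔ (∀ t : ℝ,
        deriv q t = pdv H (q t) (p t) (S t)
        ∧ deriv p t = - pdq H (q t) (p t) (S t) + Ffr (q t) (deriv q t) (S t)
        ∧ pdS H (q t) (p t) (S t) * deriv S t
            = - ⟪Ffr (q t) (deriv q t) (S t), deriv q t⟫) := by
  have hLd := hL.differentiable (by simp)
  have hVd := hV.differentiable (by simp)
  constructor
  · intro hEL t
    obtain ⟨h1, h2⟩ := hEL t
    have hVt : V (q t) (p t) (S t) = deriv q t := by rw [hp]; exact hLeg₁ _ _ _
    have hpe : p = fun τ => pdv L (q τ) (deriv q τ) (S τ) := funext hp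
    refine ⟨?_, ?_, ?_⟩
    · rw [pdv_H hLd hVd hLeg₂ hH, hVt]
    · rw [pdq_H hLd hVd hLeg₂ hH, hVt, neg_neg]
      rw [sub_eq_iff_eq_add'] at h1
      rw [hpe]
      exact h1
    · rw [pdS_H hLd hVd hLeg₂ hH, hVt, neg_mul, h2]
  · intro hHam t
    obtain ⟨g1, g2, g3⟩ := hHam t
    have hVt : V (q t) (p t) (S t) = deriv q t := by rw [hp]; exact hLeg₁ _ _ _
    have hpe : p = fun τ => pdv L (q τ) (deriv q τ) (S τ) := funext hp
    constructor
    · rw [pdq_H hLd hVd hLeg₂ hH, hVt, neg_neg, hpe] at g2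
      rw [sub_eq_iff_eq_add']
      exact g2
    · rw [pdS_H hLd hVd hLeg₂ hH, hVt, neg_mul, neg_inj] at g3
      exact g3

end
end

section
/- Let κ_{ij} = κ_{ji} ≥ 0 (1 ≤ i,j ≤ N) and let T_1,…,T_N > 0. For the heat-transfer 4-bracket (F,G;M,N)_{tr} = Σ_{i,j=1}^N (κ_{ij}/2)·(1/(T_i T_j))·((∂F/∂S_i)·(∂G/∂S_j) − (∂F/∂S_j)·(∂G/∂S_i))·((∂M/∂S_i)·(∂N/∂S_j) − (∂M/∂S_j)·(∂N/∂S_i)) evaluated with generators S := Σ_{i=1}^N S_i and H with ∂H/∂S_i = T_i, one has (S,H;S,H)_{tr} = Σ_{i,j=1}^N (κ_{ij}/2)·(T_j − T_i)²/(T_i T_j), and in particular (S,H;S,H)_{tr} ≥ 0: the heat exchange between the systems produces entropy. -/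
noncomputable section

/-- Partial derivative of `F (S₁, …, S_N)` in the entropy `S i`. -/
def pdSi {N : ℕ} (F : (Fin N → ℝ) → ℝ) (S : Fin N → ℝ) (i : Fin N) : ℝ :=
  deriv (fun s => F (Function.update S i s)) (S i)

/-- The heat-transfer 4-bracket with temperatures `Tᵢ`. -/
def bracket4tr {N : ℕ} (κ : Fin N → Fin N → ℝ) (T : Fin N → ℝ)
    (F G M K : (Fin N → ℝ) → ℝ) (S : Fin N → ℝ) : ℝ :=
  ∑ i, ∑ j,
    (κ i j / 2) * (1 / (T i * T j)) *
      ((pdSi F S i * pdSi G S j - pdSi F S j * pdSi G S i) *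
        (pdSi M S i * pdSi K S j - pdSi M S j * pdSi K S i))

lemma pdSi_sum {N : ℕ} (S : Fin N → ℝ) (i : Fin N) :
    pdSi (fun s => ∑ k, s k) S i = 1 := by
  have h : (fun s => ∑ k, Function.update S i s k)
      = fun s => s + ∑ k ∈ Finset.univ.erase i, S k := by
    funext s
    rw [Finset.sum_update_of_mem (Finset.mem_univ i), Finset.sdiff_singleton_eq_erase]
  unfold pdSi
  rw [h]
  simp

/-- The heat exchange between the subsystems produces entropy:
`(S,H;S,H)_tr = Σ_{i,j} (κ_{ij}/2)·(T_j − T_i)²/(T_i T_j) ≥ 0`. -/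
theorem heat_transfer_bracket_entropy_production {N : ℕ}
    (κ : Fin N → Fin N → ℝ) (hκsymm : ∀ i j, κ i j = κ j i) (hκpos : ∀ i j, 0 ≤ κ i j)
    (T : Fin N → ℝ) (hT : ∀ i, 0 < T i)
    (H : (Fin N → ℝ) → ℝ) (S : Fin N → ℝ)
    (hH : ∀ i, pdSi H S i = T i) :
    bracket4tr κ T (fun s => ∑ i, s i) H (fun s => ∑ i, s i) H S
        = ∑ i, ∑ j, (κ i j / 2) * (T j - T i) ^ 2 / (T i * T j)
    ∧ 0 ≤ bracket4tr κ T (fun s => ∑ i, s i) H (fun s => ∑ i, s i) H S := by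
  have heq : bracket4tr κ T (fun s => ∑ i, s i) H (fun s => ∑ i, s i) H S
      = ∑ i, ∑ j, (κ i j / 2) * (T j - T i) ^ 2 / (T i * T j) := by
    unfold bracket4tr
    refine Finset.sum_congr rfl fun i _ => Finset.sum_congr rfl fun j _ => ?_
    rw [pdSi_sum, pdSi_sum, hH, hH]
    ring
  refine ⟨heq, heq ▸ ?_⟩
  refine Finset.sum_nonneg fun i _ => Finset.sum_nonneg fun j _ => ?_
  have := hκpos i j
  have h1 := hT i
  have h2 := hT j
  positivity

end
end
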